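/- arXiv:2008.10496 — 2 statements merged into one kernel-verified Lean document; each statement's English description precedes it below -/
import Mathlib

section
/- Korn's first inequality: Let Ω ⊂ ℝⁿ be a bounded open set. There exists a constant c_K > 0 such that for all v ∈ H₀¹(Ω)ⁿ, ‖e(v)‖_{L²(Ω)} ≥ c_K ‖∇v‖_{L²(Ω)}, where e(v) = (∇v + ∇vᵀ)/2. Equivalently, ∫_Ω |e(v)|² dx ≥ (1/2) ∫_Ω |∇v|² dx for v ∈ C_c^∞(Ω)ⁿ. -/
set_option maxHeartbeats 1000000

open MeasureTheory

section KornAux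

variable {n : ℕ}

private lemma korn_contDiff_fderiv_apply {f : (Fin n → ℝ) → ℝ} (hf : ContDiff ℝ (⊤ : ℕ∞) f)
    (u : Fin n → ℝ) : ContDiff ℝ (⊤ : ℕ∞) (fun x => fderiv ℝ f x u) :=
  (ContinuousLinearMap.apply ℝ ℝ u).contDiff.comp (hf.fderiv_right (by simp))

private lemma korn_fderiv_fderiv_apply {f : (Fin n → ℝ) → ℝ} (hf : ContDiff ℝ (⊤ : ℕ∞) f)
    (u w : Fin n → ℝ) (x : Fin n → ℝ) :
    fderiv ℝ (fun y => fderiv ℝ f y u) x w = fderiv ℝ (fderiv ℝ f) x w u := by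
  rw [fderiv_clm_apply (((hf.fderiv_right (m := 1) (WithTop.coe_le_coe.mpr le_top)).differentiable one_ne_zero) x)
    (differentiableAt_const u)]
  simp

/-- Key integration-by-parts identity: `∫ ∂_w f ∂_u g = ∫ ∂_u f ∂_w g` for smooth
compactly supported scalar functions. -/
private lemma korn_ibp_swap {f g : (Fin n → ℝ) → ℝ} (hf : ContDiff ℝ (⊤ : ℕ∞) f)
    (hg : ContDiff ℝ (⊤ : ℕ∞) g) (hfs : HasCompactSupport f) (hgs : HasCompactSupport g)
    (u w : Fin n → ℝ) :
    ∫ x, fderiv ℝ f x w * fderiv ℝ g x u = ∫ x, fderiv ℝ f x u * fderiv ℝ g x w := by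
  have hInt : ∀ (p q : (Fin n → ℝ) → ℝ), ContDiff ℝ (⊤ : ℕ∞) p → ContDiff ℝ (⊤ : ℕ∞) q →
      HasCompactSupport p → Integrable (fun x => p x * q x) := by
    intro p q hp hq hps
    exact (hp.continuous.mul hq.continuous).integrable_of_hasCompactSupport
      (hps.mul_right)
  -- derivative functions
  have hDg : ∀ z, ContDiff ℝ (⊤ : ℕ∞) (fun x => fderiv ℝ g x z) :=
    fun z => korn_contDiff_fderiv_apply hg z
  have hDgs : ∀ z, HasCompactSupport (fun x => fderiv ℝ g x z) :=
    fun z => hgs.fderiv_apply ℝ z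
  have hDf : ∀ z, ContDiff ℝ (⊤ : ℕ∞) (fun x => fderiv ℝ f x z) :=
    fun z => korn_contDiff_fderiv_apply hf z
  have h1 : ∫ x, f x * fderiv ℝ (fun y => fderiv ℝ g y u) x w
      = - ∫ x, fderiv ℝ f x w * fderiv ℝ g x u := by
    apply integral_mul_fderiv_eq_neg_fderiv_mul_of_integrable
    · exact hInt _ _ (hDf w) (hDg u) ((hfs.fderiv_apply ℝ w))
    · exact hInt _ _ hf (korn_contDiff_fderiv_apply (hDg u) w) hfs
    · exact hInt _ _ hf (hDg u) hfs
    · exact fun x _ => hf.differentiable (by simp) x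
    · exact fun x _ => (hDg u).differentiable (by simp) x
  have h2 : ∫ x, f x * fderiv ℝ (fun y => fderiv ℝ g y w) x u
      = - ∫ x, fderiv ℝ f x u * fderiv ℝ g x w := by
    apply integral_mul_fderiv_eq_neg_fderiv_mul_of_integrable
    · exact hInt _ _ (hDf u) (hDg w) ((hfs.fderiv_apply ℝ u))
    · exact hInt _ _ hf (korn_contDiff_fderiv_apply (hDg w) u) hfs
    · exact hInt _ _ hf (hDg w) hfs
    · exact fun x _ => hf.differentiable (by simp) x
    · exact fun x _ => (hDg w).differentiable (by simp) x
  have hsymm : ∀ x, fderiv ℝ (fun y => fderiv ℝ g y u) x w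
      = fderiv ℝ (fun y => fderiv ℝ g y w) x u := by
    intro x
    rw [korn_fderiv_fderiv_apply hg u w x, korn_fderiv_fderiv_apply hg w u x]
    exact (hg.contDiffAt.isSymmSndFDerivAt (by rw [minSmoothness_of_isRCLikeNormedField]; exact WithTop.coe_le_coe.mpr le_top)) u w |>.symm
  have : ∫ x, f x * fderiv ℝ (fun y => fderiv ℝ g y u) x w
      = ∫ x, f x * fderiv ℝ (fun y => fderiv ℝ g y w) x u := by
    congr 1; ext x; rw [hsymm x]
  have := this.symm.trans h1
  rw [h2] at this
  linarith [this]

private lemma korn_sum_identity {n : ℕ} (M : Fin n → Fin n → ℝ) :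
    ∑ i : Fin n, ∑ j : Fin n, ((M i j + M j i) / 2) ^ 2
      = (1 / 2) * (∑ i : Fin n, ∑ j : Fin n, (M i j) ^ 2)
        + (1 / 2) * (∑ i : Fin n, ∑ j : Fin n, M i j * M j i) := by
  have h1 : ∑ i : Fin n, ∑ j : Fin n, ((M i j + M j i) / 2) ^ 2
      = ∑ i : Fin n, ∑ j : Fin n,
        ((1/4) * (M i j) ^ 2 + (1/4) * (M j i) ^ 2 + (1/2) * (M i j * M j i)) := by
    refine Finset.sum_congr rfl fun i _ => Finset.sum_congr rfl fun j _ => by ring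
  have h2 : ∑ i : Fin n, ∑ j : Fin n, (M j i) ^ 2
      = ∑ i : Fin n, ∑ j : Fin n, (M i j) ^ 2 := Finset.sum_comm
  rw [h1]
  simp only [Finset.sum_add_distrib, ← Finset.mul_sum]
  rw [h2]; ring

end KornAux

/-- Korn's first inequality for smooth compactly supported vector
fields on a bounded open set `Ω ⊂ ℝⁿ`: with `e(v) = (∇v + ∇vᵀ)/2` the symmetrized
gradient (entries `((∂ⱼvᵢ + ∂ᵢvⱼ)/2)`), one has
`∫_Ω |e(v)|² ≥ (1/2) ∫_Ω |∇v|²` (Frobenius norms), i.e. the Korn inequality holds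
with constant `c_K = 1/√2` for functions vanishing on the boundary. -/
theorem korn_first_inequality {n : ℕ}
    (Ω : Set (Fin n → ℝ)) (hΩo : IsOpen Ω) (hΩb : Bornology.IsBounded Ω)
    (v : (Fin n → ℝ) → (Fin n → ℝ))
    (hv : ContDiff ℝ (⊤ : ℕ∞) v) (hsupp : HasCompactSupport v) (hvΩ : tsupport v ⊆ Ω) :
    (1 / 2) * ∫ x in Ω, ∑ i : Fin n, ∑ j : Fin n,
        (fderiv ℝ v x (Pi.single j 1) i) ^ 2 ≤
      ∫ x in Ω, ∑ i : Fin n, ∑ j : Fin n,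
        ((fderiv ℝ v x (Pi.single j 1) i + fderiv ℝ v x (Pi.single i 1) j) / 2) ^ 2 := by
  classical
  -- components
  set f : Fin n → (Fin n → ℝ) → ℝ := fun i y => v y i with hf_def
  have hfC : ∀ i, ContDiff ℝ (⊤ : ℕ∞) (f i) := fun i =>
    (ContinuousLinearMap.proj (R := ℝ) (φ := fun _ : Fin n => ℝ) i).contDiff.comp hv
  have hfS : ∀ i, HasCompactSupport (f i) := fun i =>
    hsupp.comp_left (g := fun w : Fin n → ℝ => w i) rfl
  have hcomp : ∀ (i : Fin n) (u : Fin n → ℝ) (x : Fin n → ℝ),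
      fderiv ℝ v x u i = fderiv ℝ (f i) x u := by
    intro i u x
    have hd : DifferentiableAt ℝ v x := (hv.differentiable (by simp)) x
    have hF : HasFDerivAt (f i)
        ((ContinuousLinearMap.proj (R := ℝ) (φ := fun _ : Fin n => ℝ) i).comp
          (fderiv ℝ v x)) x :=
      (ContinuousLinearMap.proj (R := ℝ) (φ := fun _ : Fin n => ℝ) i).hasFDerivAt.comp x
        hd.hasFDerivAt
    rw [hF.fderiv]
    rfl
  set A : Fin n → Fin n → (Fin n → ℝ) → ℝ :=
    fun i j x => fderiv ℝ (f i) x (Pi.single j 1) with hA_def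
  have hAC : ∀ i j, Continuous (A i j) := fun i j =>
    (korn_contDiff_fderiv_apply (hfC i) _).continuous
  have hAS : ∀ i j, HasCompactSupport (A i j) := fun i j => (hfS i).fderiv_apply ℝ _
  have hIntAB : ∀ i j k l, Integrable (fun x => A i j x * A k l x) := fun i j k l =>
    ((hAC i j).mul (hAC k l)).integrable_of_hasCompactSupport ((hAS i j).mul_right)
  have hIntSq : ∀ i j, Integrable (fun x => (A i j x) ^ 2) := by
    intro i j; simpa [pow_two] using hIntAB i j i j
  -- vanishing outside Ω
  have hfd0 : ∀ x, x ∉ Ω → fderiv ℝ v x = 0 := by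
    intro x hx
    by_contra h
    exact hx (hvΩ (support_fderiv_subset ℝ (by simpa using h)))
  -- replace set integrals by integrals over the whole space
  rw [setIntegral_eq_integral_of_forall_compl_eq_zero
      (f := fun x => ∑ i : Fin n, ∑ j : Fin n, (fderiv ℝ v x (Pi.single j 1) i) ^ 2)
      (fun x hx => by simp [hfd0 x hx]),
    setIntegral_eq_integral_of_forall_compl_eq_zero
      (f := fun x => ∑ i : Fin n, ∑ j : Fin n,
        ((fderiv ℝ v x (Pi.single j 1) i + fderiv ℝ v x (Pi.single i 1) j) / 2) ^ 2)
      (fun x hx => by simp [hfd0 x hx])]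
  simp only [hcomp]
  show (1 / 2) * (∫ x, ∑ i : Fin n, ∑ j : Fin n, (A i j x) ^ 2)
      ≤ ∫ x, ∑ i : Fin n, ∑ j : Fin n, ((A i j x + A j i x) / 2) ^ 2
  have hRHS : ∫ x, ∑ i : Fin n, ∑ j : Fin n, ((A i j x + A j i x) / 2) ^ 2
      = (1 / 2) * (∫ x, ∑ i : Fin n, ∑ j : Fin n, (A i j x) ^ 2)
        + (1 / 2) * (∫ x, ∑ i : Fin n, ∑ j : Fin n, A i j x * A j i x) := by
    have hptw : ∀ x, ∑ i : Fin n, ∑ j : Fin n, ((A i j x + A j i x) / 2) ^ 2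
        = (1 / 2) * (∑ i : Fin n, ∑ j : Fin n, (A i j x) ^ 2)
          + (1 / 2) * (∑ i : Fin n, ∑ j : Fin n, A i j x * A j i x) :=
      fun x => korn_sum_identity (fun i j => A i j x)
    have hI1 : Integrable (fun x => (1 / 2 : ℝ) * ∑ i : Fin n, ∑ j : Fin n, (A i j x) ^ 2) :=
      (integrable_finset_sum _ fun i _ =>
        integrable_finset_sum _ fun j _ => hIntSq i j).const_mul _
    have hI2 : Integrable
        (fun x => (1 / 2 : ℝ) * ∑ i : Fin n, ∑ j : Fin n, A i j x * A j i x) :=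
      (integrable_finset_sum _ fun i _ =>
        integrable_finset_sum _ fun j _ => hIntAB i j j i).const_mul _
    simp only [hptw]
    rw [integral_add hI1 hI2, integral_const_mul, integral_const_mul]
  have hcross : 0 ≤ ∫ x, ∑ i : Fin n, ∑ j : Fin n, A i j x * A j i x := by
    have e1 : ∫ x, ∑ i : Fin n, ∑ j : Fin n, A i j x * A j i x
        = ∑ i : Fin n, ∑ j : Fin n, ∫ x, A i j x * A j i x := by
      rw [integral_finset_sum _ fun i _ =>
        integrable_finset_sum _ fun j _ => hIntAB i j j i]
      exact Finset.sum_congr rfl fun i _ =>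
        integral_finset_sum _ fun j _ => hIntAB i j j i
    have e2 : ∀ i j : Fin n, ∫ x, A i j x * A j i x = ∫ x, A i i x * A j j x :=
      fun i j =>
        korn_ibp_swap (hfC i) (hfC j) (hfS i) (hfS j) (Pi.single i 1) (Pi.single j 1)
    have e3 : ∑ i : Fin n, ∑ j : Fin n, ∫ x, A i i x * A j j x
        = ∫ x, (∑ i : Fin n, A i i x) ^ 2 := by
      have h1 : ∀ i : Fin n, ∑ j : Fin n, ∫ x, A i i x * A j j x
          = ∫ x, ∑ j : Fin n, A i i x * A j j x :=
        fun i => (integral_finset_sum _ fun j _ => hIntAB i i j j).symm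
      have h2 : ∀ x, ∑ i : Fin n, ∑ j : Fin n, A i i x * A j j x
          = (∑ i : Fin n, A i i x) ^ 2 := fun x => by
        rw [pow_two, Finset.sum_mul_sum]
      calc ∑ i : Fin n, ∑ j : Fin n, ∫ x, A i i x * A j j x
          = ∑ i : Fin n, ∫ x, ∑ j : Fin n, A i i x * A j j x :=
            Finset.sum_congr rfl fun i _ => h1 i
        _ = ∫ x, ∑ i : Fin n, ∑ j : Fin n, A i i x * A j j x :=
            (integral_finset_sum _ fun i _ =>
              integrable_finset_sum _ fun j _ => hIntAB i i j j).symm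
        _ = ∫ x, (∑ i : Fin n, A i i x) ^ 2 := by simp only [h2]
    rw [e1, Finset.sum_congr rfl fun i _ => Finset.sum_congr rfl fun j _ => e2 i j, e3]
    exact integral_nonneg fun x => sq_nonneg _
  linarith [hRHS, hcross]
end

section
/- If u_ε two-scale converges to u ∈ L²(Ω × Y), then u_ε converges weakly in L²(Ω) to the average x ↦ ∫_Y u(x,y) dy, and (u_ε) is bounded in L²(Ω). -/
open MeasureTheory Filter Topology

/-- The open unit cell `Y = (0,1)ⁿ` in `ℝⁿ`. -/
def unitCell (n : ℕ) : Set (Fin n → ℝ) := {y | ∀ i, y i ∈ Set.Ioo (0:ℝ) 1}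

/-- `Y`-periodicity of a function on `ℝⁿ` (period `1` in every coordinate). -/
def YPeriodic {n : ℕ} (φ : (Fin n → ℝ) → ℝ) : Prop :=
  ∀ (y : Fin n → ℝ) (k : Fin n → ℤ), φ (y + fun i => (k i : ℝ)) = φ y

/-- Admissible two-scale test functions, modelling `φ ∈ L²(Ω; C_per(Y))`:
`φ(x,·)` is continuous and `Y`-periodic, `φ(·,y)` is measurable, and `|φ|` is
dominated by an `L²(Ω)` function of `x`. -/
def AdmissibleTest {n : ℕ} (Ω : Set (Fin n → ℝ))
    (φ : (Fin n → ℝ) → (Fin n → ℝ) → ℝ) : Prop :=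
  (∀ x, Continuous (φ x)) ∧ (∀ x, YPeriodic (φ x)) ∧
  (∀ y, AEStronglyMeasurable (fun x => φ x y) (volume.restrict Ω)) ∧
  ∃ b : (Fin n → ℝ) → ℝ, MemLp b 2 (volume.restrict Ω) ∧ ∀ x y, |φ x y| ≤ b x

/-- Two-scale convergence (Nguetseng) of a sequence `u_j` along scales `ε j` to a
limit `u₀ ∈ L²(Ω × Y)`:
`∫_Ω u_j(x) φ(x, x/ε_j) dx → ∫_Ω ∫_Y u₀(x,y) φ(x,y) dy dx` for all admissible `φ`. -/
def TwoScaleTendsto {n : ℕ} (Ω : Set (Fin n → ℝ)) (ε : ℕ → ℝ)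
    (u : ℕ → (Fin n → ℝ) → ℝ) (u₀ : (Fin n → ℝ) → (Fin n → ℝ) → ℝ) : Prop :=
  ∀ φ, AdmissibleTest Ω φ →
    Tendsto (fun j => ∫ x in Ω, u j x * φ x ((ε j)⁻¹ • x)) atTop
      (𝓝 (∫ x in Ω, ∫ y in unitCell n, u₀ x y * φ x y))

/-! Test functions that do not depend on the fast variable are admissible, and for them two-scale
convergence is exactly weak convergence in `L²(Ω)` to the cell average of the limit. A weakly
convergent sequence is pointwise bounded as a family of functionals `v ↦ ∫ u_j v` on `L²(Ω)`,
so it is bounded in norm by the uniform boundedness principle. -/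

section L2

variable {α : Type*} [MeasurableSpace α] {μ : Measure α}

theorem MeasureTheory.MemLp.inner_toLp_eq_integral_mul {f : α → ℝ} (hf : MemLp f 2 μ)
    (g : Lp ℝ 2 μ) :
    inner ℝ (hf.toLp f) g = ∫ x, f x * g x ∂μ := by
  rw [L2.inner_def]
  refine integral_congr_ae (hf.coeFn_toLp.mono fun x hx => ?_)
  simp only [hx, RCLike.inner_apply, conj_trivial, mul_comm]

theorem exists_eLpNorm_le_of_bddAbove_integral_mul {ι : Type*} {u : ι → α → ℝ}
    (hu : ∀ i, MemLp (u i) 2 μ)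
    (hbdd : ∀ v, MemLp v 2 μ → BddAbove (Set.range fun i => |∫ x, u i x * v x ∂μ|)) :
    ∃ C : ℝ, ∀ i, eLpNorm (u i) 2 μ ≤ ENNReal.ofReal C := by
  let T : ι → Lp ℝ 2 μ →L[ℝ] ℝ := fun i => innerSL ℝ ((hu i).toLp (u i))
  have hT : ∀ i g, T i g = ∫ x, u i x * g x ∂μ := fun i g =>
    (hu i).inner_toLp_eq_integral_mul g
  have hpointwise : ∀ g : Lp ℝ 2 μ, ∃ C, ∀ i, ‖T i g‖ ≤ C := by
    intro g
    obtain ⟨C, hC⟩ := hbdd g (Lp.memLp g)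
    exact ⟨C, fun i => by simpa only [hT, Real.norm_eq_abs] using hC ⟨i, rfl⟩⟩
  obtain ⟨C, hC⟩ := banach_steinhaus hpointwise
  refine ⟨C, fun i => ?_⟩
  have hnorm : (eLpNorm (u i) 2 μ).toReal ≤ C := by
    rw [← Lp.norm_toLp (u i) (hu i), ← innerSL_apply_norm ℝ]
    exact hC i
  rw [← ENNReal.ofReal_toReal (hu i).eLpNorm_ne_top]
  exact ENNReal.ofReal_le_ofReal hnorm

end L2

theorem admissibleTest_of_memLp {n : ℕ} {Ω : Set (Fin n → ℝ)} {v : (Fin n → ℝ) → ℝ}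
    (hv : MemLp v 2 (volume.restrict Ω)) : AdmissibleTest Ω (fun x _ => v x) :=
  ⟨fun _ => continuous_const, fun _ _ _ => rfl, fun _ => hv.aestronglyMeasurable,
    fun x => |v x|, by simpa only [Real.norm_eq_abs] using hv.norm, fun _ _ => le_rfl⟩

theorem TwoScaleTendsto.tendsto_integral_mul {n : ℕ} {Ω : Set (Fin n → ℝ)} {ε : ℕ → ℝ}
    {u : ℕ → (Fin n → ℝ) → ℝ} {u₀ : (Fin n → ℝ) → (Fin n → ℝ) → ℝ}
    (hts : TwoScaleTendsto Ω ε u u₀) {v : (Fin n → ℝ) → ℝ}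
    (hv : MemLp v 2 (volume.restrict Ω)) :
    Tendsto (fun j => ∫ x in Ω, u j x * v x) atTop
      (𝓝 (∫ x in Ω, (∫ y in unitCell n, u₀ x y) * v x)) := by
  simpa only [integral_mul_const] using hts _ (admissibleTest_of_memLp hv)

theorem two_scale_implies_weak_L2_general {n : ℕ}
    (Ω : Set (Fin n → ℝ))
    (ε : ℕ → ℝ)
    (u : ℕ → (Fin n → ℝ) → ℝ) (u₀ : (Fin n → ℝ) → (Fin n → ℝ) → ℝ)
    (hmem : ∀ j, MemLp (u j) 2 (volume.restrict Ω))
    (hts : TwoScaleTendsto Ω ε u u₀) :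
    (∀ v : (Fin n → ℝ) → ℝ, MemLp v 2 (volume.restrict Ω) →
      Tendsto (fun j => ∫ x in Ω, u j x * v x) atTop
        (𝓝 (∫ x in Ω, (∫ y in unitCell n, u₀ x y) * v x))) ∧
    ∃ C : ℝ, ∀ j, eLpNorm (u j) 2 (volume.restrict Ω) ≤ ENNReal.ofReal C := by
  have hweak := fun v (hv : MemLp v 2 (volume.restrict Ω)) => hts.tendsto_integral_mul hv
  exact ⟨hweak, exists_eLpNorm_le_of_bddAbove_integral_mul hmem fun v hv =>
    (hweak v hv).abs.bddAbove_range⟩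

/-- If `u_ε` two-scale converges to `u₀ ∈ L²(Ω × Y)`, then `u_ε`
converges weakly in `L²(Ω)` to the cell average `x ↦ ∫_Y u₀(x,y) dy`, and the
sequence `(u_ε)` is bounded in `L²(Ω)`. -/
theorem two_scale_implies_weak_L2 {n : ℕ}
    (Ω : Set (Fin n → ℝ)) (hΩo : IsOpen Ω) (hΩb : Bornology.IsBounded Ω)
    (ε : ℕ → ℝ) (hεpos : ∀ j, 0 < ε j) (hε0 : Tendsto ε atTop (𝓝 0))
    (u : ℕ → (Fin n → ℝ) → ℝ) (u₀ : (Fin n → ℝ) → (Fin n → ℝ) → ℝ)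
    (hmem : ∀ j, MemLp (u j) 2 (volume.restrict Ω))
    (hmem₀ : MemLp (Function.uncurry u₀) 2
      ((volume.restrict Ω).prod (volume.restrict (unitCell n))))
    (hts : TwoScaleTendsto Ω ε u u₀) :
    (∀ v : (Fin n → ℝ) → ℝ, MemLp v 2 (volume.restrict Ω) →
      Tendsto (fun j => ∫ x in Ω, u j x * v x) atTop
        (𝓝 (∫ x in Ω, (∫ y in unitCell n, u₀ x y) * v x))) ∧
    ∃ C : ℝ, ∀ j, eLpNorm (u j) 2 (volume.restrict Ω) ≤ ENNReal.ofReal C :=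
  two_scale_implies_weak_L2_general Ω ε u u₀ hmem hts
end
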